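/- With the wavelet-tree report procedure, listing the docc distinct symbols (with frequencies) occurring in a range D[sp..ep] of the document array over alphabet [1,m] takes O(docc · log₂(m/docc) + log m) node visits; in particular, the number of tree nodes visited is bounded by a constant times the number of ancestors of the docc leaves reached. -/

import Mathlib

/-- A strictly binary tree with natural-number-labeled leaves (a wavelet tree shape). -/
inductive BTree where
  | leaf : ℕ → BTree
  | node : BTree → BTree → BTree

namespace BTree

/-- The leaves of the tree, in left-to-right order. -/
def leaves : BTree → List ℕ
  | leaf a => [a]
  | node l r => l.leaves ++ r.leaves

/-- Number of leaves. -/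
def numLeaves (t : BTree) : ℕ := t.leaves.length

/-- Balanced: at every node, the numbers of leaves of the two subtrees differ by at most 1. -/
def balanced : BTree → Prop
  | leaf _ => True
  | node l r => ((l.numLeaves : ℤ) - (r.numLeaves : ℤ) ≤ 1) ∧
      ((r.numLeaves : ℤ) - (l.numLeaves : ℤ) ≤ 1) ∧ l.balanced ∧ r.balanced

/-- A (root-to-node) path, given as a list of booleans (`false` = go left). -/
def validPath : BTree → List Bool → Prop
  | _, [] => True
  | leaf _, _ :: _ => False
  | node l r, b :: p => if b then r.validPath p else l.validPath p

/-- The subtree reached by following a path. -/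
def subtreeAt : BTree → List Bool → Option BTree
  | t, [] => some t
  | leaf _, _ :: _ => none
  | node l r, b :: p => if b then r.subtreeAt p else l.subtreeAt p

/-- The index (0-based, in left-to-right leaf order) of the first leaf below the node at a path. -/
def pathOffset : BTree → List Bool → ℕ
  | _, [] => 0
  | leaf _, _ :: _ => 0
  | node l r, b :: p => if b then l.numLeaves + r.pathOffset p else l.pathOffset p

/-- Number of leaves below the node at a path (0 if the path is invalid). -/
def pathLeaves (t : BTree) (p : List Bool) : ℕ := ((t.subtreeAt p).map numLeaves).getD 0

/-- The set of (positions of) leaves descending from the node at a path. -/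
def leafInterval (t : BTree) (p : List Bool) : Finset ℕ :=
  Finset.Ico (t.pathOffset p) (t.pathOffset p + t.pathLeaves p)

end BTree

namespace BTree

/-- Number of wavelet-tree nodes visited by the `report` recursion on a query range
whose restriction to the symbols below the current node is `l`: a node is visited iff
its mapped interval is nonempty. -/
def visits : BTree → List ℕ → ℕ
  | _, [] => 0
  | leaf _, _ => 1
  | node tl tr, l =>
      1 + visits tl (l.filter fun c => decide (c ∈ tl.leaves)) +
        visits tr (l.filter fun c => decide (c ∈ tr.leaves))

end BTree

/-!
A node is visited iff some symbol below it occurs in the query range, so the visited nodes are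
the ancestors of the `r` occurring leaves. In a balanced tree with `m` leaves, of height
`⌈log₂ m⌉`, depth `d` holds at most `min (2 ^ d) r` of them; summing over the depths gives at most
`2 ^ k` ancestors above depth `k ≈ log₂ r` and at most `r` per level below it, i.e.
`O(r · log₂ (m / r))` in total.
-/

open Finset

lemma Nat.clog_two_lt_clog_two_add {a b : ℕ} (ha : 0 < a) (hb : 0 < b) (hab : a ≤ b + 1) :
    Nat.clog 2 a < Nat.clog 2 (a + b) := by
  rw [Nat.clog_of_two_le (n := a + b) one_lt_two (by omega)]
  exact Nat.lt_succ_of_le (Nat.clog_mono_right 2 (by omega))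

lemma Nat.log_le_log_div_add_log_add_one {b m r : ℕ} (hb : 1 < b) (hr : 0 < r) (hrm : r ≤ m) :
    Nat.log b m ≤ Nat.log b (m / r) + Nat.log b r + 1 := by
  refine Nat.le_of_lt_succ (Nat.log_lt_of_lt_pow (by omega) ?_)
  calc m < r * (m / r + 1) := by
        have := Nat.div_add_mod m r
        have := Nat.mod_lt m hr
        rw [mul_add_one]; omega
    _ ≤ b ^ (Nat.log b r + 1) * b ^ (Nat.log b (m / r) + 1) :=
        Nat.mul_le_mul (Nat.lt_pow_succ_log_self hb _).le (Nat.lt_pow_succ_log_self hb _)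
    _ = b ^ (Nat.log b (m / r) + Nat.log b r + 1).succ := by rw [← pow_add]; congr 1; omega

def ancestorBound (h r : ℕ) : ℕ := ∑ d ∈ range (h + 1), min (2 ^ d) r

lemma ancestorBound_mono_left {h₁ h₂ : ℕ} (r : ℕ) (h : h₁ ≤ h₂) :
    ancestorBound h₁ r ≤ ancestorBound h₂ r :=
  sum_le_sum_of_subset (range_subset_range.mpr (by omega))

lemma ancestorBound_zero_left (r : ℕ) : ancestorBound 0 r = min 1 r := by
  simp [ancestorBound]

lemma one_add_ancestorBound_add_le {r₁ r₂ : ℕ} (h : ℕ) (hr : 0 < r₁ + r₂) :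
    1 + ancestorBound h r₁ + ancestorBound h r₂ ≤ ancestorBound (h + 1) (r₁ + r₂) := by
  have hlevel (d : ℕ) : min (2 ^ d) r₁ + min (2 ^ d) r₂ ≤ min (2 ^ (d + 1)) (r₁ + r₂) := by
    rw [pow_succ]; omega
  rw [ancestorBound, ancestorBound, ancestorBound, sum_range_succ' _ (h + 1), pow_zero,
    min_eq_left (by omega : 1 ≤ r₁ + r₂)]
  have := sum_le_sum fun d (_ : d ∈ range (h + 1)) => hlevel d
  rw [sum_add_distrib] at this
  omega

lemma ancestorBound_le_two_pow_add (h k r : ℕ) :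
    ancestorBound h r ≤ 2 ^ k + (h + 1 - k) * r := by
  calc ancestorBound h r ≤ ∑ d ∈ range (k + (h + 1 - k)), min (2 ^ d) r :=
        sum_le_sum_of_subset (range_subset_range.mpr (by omega))
    _ = ∑ d ∈ range k, min (2 ^ d) r + ∑ d ∈ range (h + 1 - k), min (2 ^ (k + d)) r :=
        sum_range_add _ _ _
    _ ≤ ∑ d ∈ range k, 2 ^ d + ∑ _d ∈ range (h + 1 - k), r := by
        gcongr <;> simp
    _ ≤ 2 ^ k + (h + 1 - k) * r := by
        rw [Nat.geomSum_eq le_rfl, sum_const, card_range, smul_eq_mul]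
        gcongr
        exact (Nat.div_le_self _ _).trans (Nat.sub_le _ _)

lemma ancestorBound_clog_le {m r : ℕ} (hr : 0 < r) (hrm : r ≤ m) :
    ancestorBound (Nat.clog 2 m) r ≤ 5 * (r * max 1 (Nat.log 2 (m / r))) := by
  set L := max 1 (Nat.log 2 (m / r))
  have hL : 1 ≤ L := le_max_left _ _
  have hclog : Nat.clog 2 m ≤ Nat.log 2 m + 1 :=
    Nat.clog_le_of_le_pow (Nat.lt_pow_succ_log_self one_lt_two m).le
  have hlog := Nat.log_le_log_div_add_log_add_one one_lt_two hr hrm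
  have hpow : 2 ^ (Nat.log 2 r + 1) ≤ 2 * r := by
    rw [pow_succ, mul_comm]
    exact Nat.mul_le_mul_left 2 (Nat.pow_log_le_self 2 hr.ne')
  have hdepth : Nat.clog 2 m + 1 - (Nat.log 2 r + 1) ≤ 3 * L := by
    have := le_max_right 1 (Nat.log 2 (m / r)); omega
  calc ancestorBound (Nat.clog 2 m) r
      ≤ 2 ^ (Nat.log 2 r + 1) + (Nat.clog 2 m + 1 - (Nat.log 2 r + 1)) * r :=
        ancestorBound_le_two_pow_add _ _ _
    _ ≤ 2 * (r * L) + 3 * L * r := by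
        gcongr
        exact hpow.trans (by gcongr; exact Nat.le_mul_of_pos_right r hL)
    _ = 5 * (r * L) := by ring

namespace BTree

lemma numLeaves_node (l r : BTree) : (node l r).numLeaves = l.numLeaves + r.numLeaves := by
  simp [numLeaves, leaves]

lemma numLeaves_pos (t : BTree) : 0 < t.numLeaves := by
  induction t with
  | leaf a => simp [numLeaves, leaves]
  | node l r ihl ihr => rw [numLeaves_node]; omega

lemma visits_node_of_ne_nil (tl tr : BTree) {l : List ℕ} (hl : l ≠ []) :
    visits (node tl tr) l =
      1 + visits tl (l.filter fun c => decide (c ∈ tl.leaves)) +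
        visits tr (l.filter fun c => decide (c ∈ tr.leaves)) := by
  obtain ⟨c, l, rfl⟩ := List.exists_cons_of_ne_nil hl
  rfl

lemma card_toFinset_filter_leaves_add {tl tr : BTree} (hnd : (node tl tr).leaves.Nodup)
    {l : List ℕ} (hl : ∀ c ∈ l, c ∈ (node tl tr).leaves) :
    (l.filter fun c => decide (c ∈ tl.leaves)).toFinset.card +
      (l.filter fun c => decide (c ∈ tr.leaves)).toFinset.card = l.toFinset.card := by
  obtain ⟨-, -, hdisj⟩ := List.nodup_append.mp hnd
  simp only [List.toFinset_filter, decide_eq_true_eq]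
  rw [← card_filter_add_card_filter_not (s := l.toFinset) (fun c => c ∈ tl.leaves)]
  congr 2
  refine filter_congr fun c hc => ⟨fun hr hl => hdisj c hl c hr rfl, fun hnl => ?_⟩
  simpa [leaves, hnl] using hl c (List.mem_toFinset.mp hc)

lemma clog_numLeaves_lt_of_balanced {tl tr : BTree} (hb : (node tl tr).balanced) :
    Nat.clog 2 tl.numLeaves < Nat.clog 2 (node tl tr).numLeaves ∧
      Nat.clog 2 tr.numLeaves < Nat.clog 2 (node tl tr).numLeaves := by
  obtain ⟨hlr, hrl, -, -⟩ := hb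
  have hl := numLeaves_pos tl
  have hr := numLeaves_pos tr
  rw [numLeaves_node]
  exact ⟨Nat.clog_two_lt_clog_two_add hl hr (by omega),
    add_comm tr.numLeaves _ ▸ Nat.clog_two_lt_clog_two_add hr hl (by omega)⟩

theorem visits_le_ancestorBound (t : BTree) (hb : t.balanced) (hnd : t.leaves.Nodup)
    (l : List ℕ) (hl : ∀ c ∈ l, c ∈ t.leaves) :
    t.visits l ≤ ancestorBound (Nat.clog 2 t.numLeaves) l.toFinset.card := by
  induction t generalizing l with
  | leaf a =>
    rcases l with _ | ⟨c, l⟩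
    · simp [visits]
    · simp only [visits, numLeaves, leaves, List.length_singleton, Nat.clog_one_right,
        ancestorBound_zero_left, le_min_iff, le_refl, true_and]
      exact card_pos.mpr ⟨c, by simp⟩
  | node tl tr ihl ihr =>
    rcases eq_or_ne l [] with rfl | hne
    · simp [visits]
    obtain ⟨hcl, hcr⟩ := clog_numLeaves_lt_of_balanced hb
    obtain ⟨-, -, hbl, hbr⟩ := hb
    obtain ⟨hndl, hndr, -⟩ := List.nodup_append.mp hnd
    obtain ⟨h, hh⟩ : ∃ h, Nat.clog 2 (node tl tr).numLeaves = h + 1 :=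
      Nat.exists_eq_add_one_of_ne_zero (by omega)
    rw [hh, Nat.lt_succ_iff] at hcl hcr
    have hfilter (t : BTree) : ∀ c ∈ l.filter (fun c => decide (c ∈ t.leaves)), c ∈ t.leaves :=
      fun c hc => by simpa using (List.mem_filter.mp hc).2
    have hcard := card_toFinset_filter_leaves_add hnd hl
    rw [visits_node_of_ne_nil tl tr hne, hh, ← hcard]
    refine le_trans ?_ (one_add_ancestorBound_add_le h ?_)
    · gcongr
      · exact (ihl hbl hndl _ (hfilter tl)).trans (ancestorBound_mono_left _ hcl)
      · exact (ihr hbr hndr _ (hfilter tr)).trans (ancestorBound_mono_left _ hcr)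
    · rw [hcard]
      exact card_pos.mpr ((List.toFinset_nonempty_iff l).mpr hne)

end BTree

/-- Listing the `docc` distinct symbols (with frequencies) occurring in a range
`D[sp..ep]` of the document array over alphabet of size `m` with the wavelet-tree
report procedure takes `O(docc·log₂(m/docc) + log m)` node visits (with the convention
`log x = max(1, log x)`). -/
theorem report_visit_bound :
    ∃ c0 : ℕ, 0 < c0 ∧
      ∀ (t : BTree) (D : List ℕ) (sp ep : ℕ),
        t.balanced → t.leaves.Pairwise (· < ·) → (∀ c ∈ D, c ∈ t.leaves) →
        sp ≤ ep → ep < D.length →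
        let sub := (D.drop sp).take (ep - sp + 1)
        let docc := sub.dedup.length
        t.visits sub ≤
          c0 * (docc * max 1 (Nat.log 2 (t.numLeaves / docc)) +
            Nat.clog 2 t.numLeaves) := by
  refine ⟨5, by norm_num, ?_⟩
  intro t D sp ep hb hs hD hsp hep sub docc
  have hne : sub ≠ [] := by
    rw [← List.length_pos_iff]
    simp only [sub, List.length_take, List.length_drop]
    omega
  have hsub (c) (hc : c ∈ sub) : c ∈ t.leaves :=
    hD c (List.mem_of_mem_drop (List.mem_of_mem_take hc))
  have hdocc : docc = sub.toFinset.card := (List.card_toFinset sub).symm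
  have hpos : 0 < docc := hdocc ▸ card_pos.mpr ((List.toFinset_nonempty_iff sub).mpr hne)
  have hdocc_le : docc ≤ t.numLeaves := hdocc ▸ (card_le_card fun c hc =>
    List.mem_toFinset.mpr (hsub c (List.mem_toFinset.mp hc))).trans (List.toFinset_card_le _)
  calc t.visits sub ≤ ancestorBound (Nat.clog 2 t.numLeaves) docc :=
        hdocc ▸ t.visits_le_ancestorBound hb hs.nodup sub hsub
    _ ≤ 5 * (docc * max 1 (Nat.log 2 (t.numLeaves / docc))) := ancestorBound_clog_le hpos hdocc_le
    _ ≤ _ := Nat.mul_le_mul_left 5 (Nat.le_add_right _ _)
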